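/- Let k be even and consider k+2 creases bounding a run of k+1 equal angles flanked by strictly larger angles in a flat vertex fold. The number of ways to assign Mountain/Valley to these k+2 creases so that M - V = 0 is choose(k+2)((k+2)/2). -/

import Mathlib

open Finset

theorem card_boolFun_card_true_eq {α : Type*} [Fintype α] [DecidableEq α] (m : ℕ) :
    #{f : α → Bool | #{i | f i = true} = m} = (Fintype.card α).choose m := by
  let trueSet : (α → Bool) ≃ Finset α :=
    { toFun := fun f => {i | f i = true}
      invFun := fun s i => decide (i ∈ s)
      left_inv := fun f => by ext; simp
      right_inv := fun s => by ext; simp }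
  rw [← card_univ, ← card_powersetCard]
  exact card_equiv trueSet fun f => by simp [trueSet, mem_powersetCard]

theorem run_count_even_general (k : ℕ) :
    (Finset.univ.filter (fun f : Fin (k + 2) → Bool =>
        (Finset.univ.filter (fun i => f i = true)).card = (k + 2) / 2)).card =
      Nat.choose (k + 2) ((k + 2) / 2) := by
  simpa using card_boolFun_card_true_eq (α := Fin (k + 2)) ((k + 2) / 2)

/-- Equal angles in a row, `k` even: the number of MV assignments of the `k + 2`
creases bounding the run with `M - V = 0`, i.e. exactly `(k+2)/2` mountains, is
`choose (k+2) ((k+2)/2)`. -/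
theorem run_count_even (k : ℕ) (hk : Even k) :
    (Finset.univ.filter (fun f : Fin (k + 2) → Bool =>
        (Finset.univ.filter (fun i => f i = true)).card = (k + 2) / 2)).card =
      Nat.choose (k + 2) ((k + 2) / 2) :=
  run_count_even_general k
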